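/- Let n ≥ 1, a ∈ ℝ and c ∈ ℝ^n, let L = { −π/2 + 2kπ : k ∈ ℤ }, and let C ∈ L be a point of L minimizing |C − 2a|. Consider the optimistic bilevel problem: minimize (x − a)² + Σ_{i=1}^n (y_i − a − c_i)² over x ∈ ℝ and y ∈ ℝ^n subject to, for every i, y_i ∈ argmin_{t ∈ ℝ} sin(x + t − c_i). Then the optimal value equals n(C − 2a)² / (1 + n), and it is attained at x = ((1 − n)a + nC)/(1 + n) together with y_i = C + c_i − x for every i. -/

import Mathlib

open Real

theorem bilevel_sin_example
    (n : ℕ) (hn : 1 ≤ n) (a : ℝ) (c : Fin n → ℝ) (C : ℝ)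
    -- `L = { −π/2 + 2kπ : k ∈ ℤ }` and `C ∈ L` minimizes `|C − 2a|` over `L`:
    (hCL : ∃ k : ℤ, C = -(π / 2) + 2 * (k : ℝ) * π)
    (hCmin : ∀ t : ℝ, (∃ k : ℤ, t = -(π / 2) + 2 * (k : ℝ) * π) →
      |C - 2 * a| ≤ |t - 2 * a|) :
    -- the claimed optimal point:
    (((1 - (n : ℝ)) * a + (n : ℝ) * C) / (1 + (n : ℝ)),
      fun i : Fin n => C + c i - ((1 - (n : ℝ)) * a + (n : ℝ) * C) / (1 + (n : ℝ))) ∈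
      {p : ℝ × (Fin n → ℝ) |
        ∀ i : Fin n, ∀ t : ℝ, Real.sin (p.1 + p.2 i - c i) ≤ Real.sin (p.1 + t - c i)} ∧
    -- it attains the claimed optimal value:
    ((((1 - (n : ℝ)) * a + (n : ℝ) * C) / (1 + (n : ℝ)) - a) ^ 2 +
        ∑ i : Fin n,
          ((C + c i - ((1 - (n : ℝ)) * a + (n : ℝ) * C) / (1 + (n : ℝ))) - a - c i) ^ 2) =
      (n : ℝ) * (C - 2 * a) ^ 2 / (1 + (n : ℝ)) ∧
    -- and this value is a lower bound over all feasible points: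
    (∀ x : ℝ, ∀ y : Fin n → ℝ,
      (∀ i : Fin n, ∀ t : ℝ, Real.sin (x + y i - c i) ≤ Real.sin (x + t - c i)) →
      (n : ℝ) * (C - 2 * a) ^ 2 / (1 + (n : ℝ)) ≤
        (x - a) ^ 2 + ∑ i : Fin n, (y i - a - c i) ^ 2) := by
  have hnpos : (0:ℝ) < (n:ℝ) := by exact_mod_cast Nat.lt_of_lt_of_le Nat.zero_lt_one hn
  have hden : (0:ℝ) < 1 + (n:ℝ) := by linarith
  have hsinC : Real.sin C = -1 := by
    obtain ⟨k, hk⟩ := hCL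
    rw [Real.sin_eq_neg_one_iff]
    exact ⟨k, by rw [hk]; ring⟩
  refine ⟨?_, ?_, ?_⟩
  · intro i t
    simp only
    have : (((1 - (n : ℝ)) * a + (n : ℝ) * C) / (1 + (n : ℝ)) +
        (C + c i - ((1 - (n : ℝ)) * a + (n : ℝ) * C) / (1 + (n : ℝ))) - c i) = C := by ring
    rw [this, hsinC]
    exact Real.neg_one_le_sin _
  · have h1 : ∀ i : Fin n,
        ((C + c i - ((1 - (n : ℝ)) * a + (n : ℝ) * C) / (1 + (n : ℝ))) - a - c i) ^ 2
        = ((C - 2*a) / (1 + (n:ℝ))) ^ 2 := by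
      intro i
      field_simp
      ring
    rw [Finset.sum_congr rfl (fun i _ => h1 i), Finset.sum_const, Finset.card_univ,
      Fintype.card_fin]
    rw [nsmul_eq_mul]
    field_simp
    ring
  · intro x y hfeas
    have hz : ∀ i : Fin n, ∃ k : ℤ, x + y i - c i = -(π / 2) + 2 * (k : ℝ) * π := by
      intro i
      have h := hfeas i (-(π/2) - x + c i)
      have : x + (-(π/2) - x + c i) - c i = -(π/2) := by ring
      rw [this] at h
      have hs : Real.sin (-(π/2)) = -1 := by
        rw [Real.sin_neg, Real.sin_pi_div_two]
      have hle : Real.sin (x + y i - c i) ≤ -1 := by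
        rw [← hs]; exact h
      have heq : Real.sin (x + y i - c i) = -1 :=
        le_antisymm hle (Real.neg_one_le_sin _)
      rw [Real.sin_eq_neg_one_iff] at heq
      obtain ⟨k, hk⟩ := heq
      exact ⟨k, by rw [← hk]; ring⟩
    -- per-term bound
    have key : ∀ i : Fin n,
        (C - 2*a)^2 / (1 + (n:ℝ)) ≤ (x - a)^2 / (n:ℝ) + (y i - a - c i)^2 := by
      intro i
      obtain ⟨k, hk⟩ := hz i
      set z := x + y i - c i with hzdef
      have hzL : |C - 2*a| ≤ |z - 2*a| := hCmin z ⟨k, hk⟩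
      have hC2 : (C - 2*a)^2 ≤ (z - 2*a)^2 := by
        have := sq_le_sq' (neg_abs_le (z - 2*a)) (le_abs_self (z - 2*a))
        nlinarith [sq_abs (C - 2*a), sq_abs (z - 2*a), abs_nonneg (z - 2*a),
          abs_nonneg (C - 2*a), mul_self_le_mul_self (abs_nonneg (C - 2*a)) hzL]
      have hsplit : z - 2*a = (x - a) + (y i - a - c i) := by rw [hzdef]; ring
      have hub : (z - 2*a)^2 / (1 + (n:ℝ)) ≤ (x - a)^2 / (n:ℝ) + (y i - a - c i)^2 := by
        rw [div_le_iff₀ hden, hsplit]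
        set u := x - a; set v := y i - a - c i
        have h0 : 0 ≤ (u - (n:ℝ)*v)^2 := sq_nonneg _
        have : ((u + v)^2) * (n:ℝ) ≤ ((u^2 / (n:ℝ) + v^2) * (1 + (n:ℝ))) * (n:ℝ) := by
          field_simp
          nlinarith [sq_nonneg (u - (n:ℝ)*v)]
        exact le_of_mul_le_mul_right this hnpos
      calc (C - 2*a)^2 / (1 + (n:ℝ)) ≤ (z - 2*a)^2 / (1 + (n:ℝ)) := by gcongr
          _ ≤ _ := hub
    have hsum := Finset.sum_le_sum (fun i (_ : i ∈ Finset.univ) => key i)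
    rw [Finset.sum_add_distrib, Finset.sum_const, Finset.sum_const, Finset.card_univ,
      Fintype.card_fin] at hsum
    simp only [nsmul_eq_mul] at hsum
    have : (n:ℝ) * ((x-a)^2 / (n:ℝ)) = (x-a)^2 := by field_simp
    rw [this] at hsum
    calc (n:ℝ) * (C - 2*a)^2 / (1 + (n:ℝ)) = (n:ℝ) * ((C - 2*a)^2 / (1 + (n:ℝ))) := by ring
      _ ≤ _ := hsum
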